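/- Let 0 < γ < β ≤ 1 and φ(x) = (1+β-γ-βx)x. Then the derivative of the k-th iterate, (φ^(k))'(x) = ∏_{i=0}^{k-1} φ'(φ^(i)(x)), converges to 0 as k → ∞ for every x ∈ (0,1]. -/

import Mathlib

/-! The orbit of `x ∈ (0, 1]` stays in `[m, 1]` with `m = min x x*`, and on that interval
`φ y - x* = (y - x*) (1 - β y)` with `0 ≤ 1 - β y ≤ 1 - β m < 1`, so the orbit converges
geometrically to the equilibrium `x* = 1 - γ/β`. Hence the factors `φ'(φ^(i) x)` tend to
`φ'(x*) = 1 - β + γ ∈ (0, 1)`, and partial products of a sequence whose limit has norm below `1`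
eventually shrink geometrically, hence tend to `0`. -/

open Filter Finset Set Topology

theorem hasDerivAt_iterate_prod {𝕜 : Type*} [NontriviallyNormedField 𝕜] {f : 𝕜 → 𝕜}
    (hf : Differentiable 𝕜 f) (n : ℕ) (x : 𝕜) :
    HasDerivAt (f^[n]) (∏ i ∈ range n, deriv f (f^[i] x)) x := by
  induction n with
  | zero => simpa using hasDerivAt_id x
  | succ n ih =>
    rw [Function.iterate_succ', prod_range_succ, mul_comm]
    exact (hf _).hasDerivAt.comp x ih

theorem tendsto_prod_range_zero_of_tendsto {R : Type*} [NormedCommRing R] [CompleteSpace R]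
    {a : ℕ → R} {L : R} (ha : Tendsto a atTop (𝓝 L)) (hL : ‖L‖ < 1) :
    Tendsto (fun n => ∏ i ∈ range n, a i) atTop (𝓝 0) := by
  obtain ⟨r, hLr, hr1⟩ := exists_between hL
  have hsmall : ∀ᶠ n in atTop, ‖a n‖ < r := ha.norm.eventually (gt_mem_nhds hLr)
  refine (summable_of_ratio_norm_eventually_le hr1 ?_).tendsto_atTop_zero
  filter_upwards [hsmall] with n hn
  rw [prod_range_succ, mul_comm r]
  exact (norm_mul_le _ _).trans (mul_le_mul_of_nonneg_left hn.le (norm_nonneg _))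

theorem tendsto_iterate_of_dist_le_mul {α : Type*} [PseudoMetricSpace α] {f : α → α}
    {s : Set α} {p x : α} {r : ℝ} (hs : MapsTo f s s)
    (hf : ∀ y ∈ s, dist (f y) p ≤ r * dist y p) (hr0 : 0 ≤ r) (hr1 : r < 1) (hx : x ∈ s) :
    Tendsto (fun n => f^[n] x) atTop (𝓝 p) := by
  have hbound : ∀ n : ℕ, dist (f^[n] x) p ≤ r ^ n * dist x p := by
    intro n
    induction n with
    | zero => simp
    | succ n ih =>
      rw [Function.iterate_succ_apply', pow_succ', mul_assoc]
      exact (hf _ (hs.iterate n hx)).trans (mul_le_mul_of_nonneg_left ih hr0)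
  rw [tendsto_iff_dist_tendsto_zero]
  refine squeeze_zero (fun _ => dist_nonneg) hbound ?_
  simpa using (tendsto_pow_atTop_nhds_zero_of_lt_one hr0 hr1).mul_const (dist x p)

namespace InfectionFraction

def map (β γ x : ℝ) : ℝ := (1 + β - γ - β * x) * x

noncomputable def equilibrium (β γ : ℝ) : ℝ := 1 - γ / β

variable {β γ : ℝ}

theorem hasDerivAt_map (x : ℝ) : HasDerivAt (map β γ) (1 + β - γ - 2 * β * x) x := by
  have h := (((hasDerivAt_id' x).const_mul β).const_sub (1 + β - γ)).mul (hasDerivAt_id' x)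
  exact h.congr_deriv (by ring)

theorem deriv_map : deriv (map β γ) = fun x => 1 + β - γ - 2 * β * x :=
  funext fun x => (hasDerivAt_map x).deriv

theorem deriv_map_equilibrium (hβ : β ≠ 0) :
    deriv (map β γ) (equilibrium β γ) = 1 - β + γ := by
  rw [deriv_map, equilibrium]
  field_simp
  ring

theorem map_sub_equilibrium (hβ : β ≠ 0) (x : ℝ) :
    map β γ x - equilibrium β γ = (x - equilibrium β γ) * (1 - β * x) := by
  rw [map, equilibrium]
  field_simp
  ring

theorem map_sub_self (hβ : β ≠ 0) (x : ℝ) :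
    map β γ x - x = β * x * (equilibrium β γ - x) := by
  rw [map, equilibrium]
  field_simp
  ring

theorem one_sub_map (x : ℝ) : 1 - map β γ x = (1 - x) * (1 - β * x) + γ * x := by
  rw [map]
  ring

theorem mapsTo_map_Icc (hβ : 0 < β) (hβ1 : β ≤ 1) (hγ : 0 ≤ γ) {m : ℝ} (hm : 0 ≤ m)
    (hme : m ≤ equilibrium β γ) : MapsTo (map β γ) (Icc m 1) (Icc m 1) := by
  rintro y ⟨hmy, hy1⟩
  have hy0 : 0 ≤ y := hm.trans hmy
  have hβy : 0 ≤ 1 - β * y := by nlinarith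
  refine ⟨?_, ?_⟩
  · rcases le_total y (equilibrium β γ) with hye | hey
    · have := map_sub_self (γ := γ) hβ.ne' y
      nlinarith [mul_nonneg (mul_nonneg hβ.le hy0) (sub_nonneg.mpr hye)]
    · have := map_sub_equilibrium (γ := γ) hβ.ne' y
      nlinarith [mul_nonneg (sub_nonneg.mpr hey) hβy]
  · have := one_sub_map (β := β) (γ := γ) y
    nlinarith [mul_nonneg (sub_nonneg.mpr hy1) hβy, mul_nonneg hγ hy0]

theorem dist_map_equilibrium_le (hβ : 0 < β) (hβ1 : β ≤ 1) {m y : ℝ} (hy : y ∈ Icc m 1) :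
    dist (map β γ y) (equilibrium β γ) ≤ (1 - β * m) * dist y (equilibrium β γ) := by
  have hβy : 0 ≤ 1 - β * y := by nlinarith [hy.2]
  rw [Real.dist_eq, Real.dist_eq, map_sub_equilibrium hβ.ne', abs_mul, abs_of_nonneg hβy,
    mul_comm]
  exact mul_le_mul_of_nonneg_right (by nlinarith [hy.1]) (abs_nonneg _)

theorem tendsto_iterate_map (hγ : 0 ≤ γ) (hγβ : γ < β) (hβ1 : β ≤ 1) {x : ℝ}
    (hx : x ∈ Set.Ioc 0 1) :
    Tendsto (fun n => (map β γ)^[n] x) atTop (𝓝 (equilibrium β γ)) := by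
  have hβ : 0 < β := hγ.trans_lt hγβ
  have he : 0 < equilibrium β γ := by
    rw [equilibrium, sub_pos, div_lt_one hβ]
    exact hγβ
  set m := min x (equilibrium β γ)
  have hm : 0 < m := lt_min hx.1 he
  have hm1 : m ≤ 1 := (min_le_left _ _).trans hx.2
  refine tendsto_iterate_of_dist_le_mul (mapsTo_map_Icc hβ hβ1 hγ hm.le (min_le_right _ _))
    (fun y hy => dist_map_equilibrium_le hβ hβ1 hy) (by nlinarith) (by nlinarith)
    ⟨min_le_left _ _, hx.2⟩

end InfectionFraction

open InfectionFraction in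
theorem infection_fraction_iterate_deriv_tendsto_zero
    (β γ : ℝ) (hγ : 0 < γ) (hγβ : γ < β) (hβ : β ≤ 1)
    (φ : ℝ → ℝ) (hφ : ∀ x, φ x = (1 + β - γ - β * x) * x) :
    ∀ x ∈ Set.Ioc (0:ℝ) 1,
      (∀ k : ℕ, deriv (φ^[k]) x = ∏ i ∈ Finset.range k, deriv φ (φ^[i] x)) ∧
      Filter.Tendsto (fun k => ∏ i ∈ Finset.range k, deriv φ (φ^[i] x))
        Filter.atTop (nhds 0) := by
  intro x hx
  obtain rfl : φ = map β γ := funext hφ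
  refine ⟨fun k => (hasDerivAt_iterate_prod (fun y => (hasDerivAt_map y).differentiableAt)
    k x).deriv, tendsto_prod_range_zero_of_tendsto (L := 1 - β + γ) ?_ ?_⟩
  · have hcont : Continuous (deriv (map β γ)) := by
      rw [deriv_map]
      fun_prop
    rw [← deriv_map_equilibrium (hγ.trans hγβ).ne']
    exact (hcont.tendsto _).comp (tendsto_iterate_map hγ.le hγβ hβ hx)
  · rw [Real.norm_eq_abs, abs_lt]
    constructor <;> linarith
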